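/- Let κ : ℝ → ℝ be continuous, K(v) = ∫₀ᵛ κ(t) dt, let k₁, k₃, k₄ : ℝ → ℝ be C¹ functions satisfying k₁' = −2k₃, k₃' = 2k₁ − κ·k₄, k₄' = κ·k₃, and let f : ℝ → ℍ be a C¹ curve satisfying f'(v) = j·(cos K(v) + sin K(v)·i)·f(v). Then the ℍ-valued function v ↦ √2·k₁(v)·conj(f(v))·i·f(v) + √2·conj(f(v))·(k₄(v) − k₃(v)·i)·j·(cos K(v) + sin K(v)·i)·f(v) is constant; in particular, the curvature functions κ̃₁, κ̃₂, κ̃₃ defined as its i-, j- and k-components are independent of v. -/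

import Mathlib

open scoped Quaternion

/-- The quaternion imaginary unit `i`. -/
def qi : ℍ[ℝ] := ⟨0, 1, 0, 0⟩
/-- The quaternion imaginary unit `j`. -/
def qj : ℍ[ℝ] := ⟨0, 0, 1, 0⟩

/-- The `ℍ`-valued function
`v ↦ √2·k₁ v·conj (f v)·i·f v + √2·conj (f v)·(k₄ v − k₃ v·i)·j·(cos (K v) + sin (K v)·i)·f v`. -/
noncomputable def gfun (k₁ k₃ k₄ K : ℝ → ℝ) (f : ℝ → ℍ[ℝ]) (v : ℝ) : ℍ[ℝ] :=
  (Real.sqrt 2 * k₁ v : ℝ) • (star (f v) * qi * f v)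
    + (Real.sqrt 2 : ℝ) • (star (f v) * ((k₄ v : ℍ[ℝ]) - (k₃ v : ℍ[ℝ]) * qi) * qj
        * ((Real.cos (K v) : ℍ[ℝ]) + (Real.sin (K v) : ℍ[ℝ]) * qi) * f v)

instance : StarModule ℝ ℍ[ℝ] := ⟨fun r x => by ext <;> simp⟩

lemma coe_hasDerivAt' {u : ℝ → ℝ} {u' v : ℝ} (h : HasDerivAt u u' v) :
    HasDerivAt (fun t => ((u t : ℝ) : ℍ[ℝ])) ((u' : ℝ) : ℍ[ℝ]) v := by
  have h2 := h.smul_const (1 : ℍ[ℝ])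
  have e1 : ∀ r : ℝ, (r : ℍ[ℝ]) = r • (1:ℍ[ℝ]) := fun r => by ext <;> simp
  simpa [← e1] using h2

set_option maxHeartbeats 4000000 in
lemma key_identity (x : ℍ[ℝ]) (c s a1 a3 a4 k r : ℝ) (h : s^2 + c^2 = 1) :
    0 = (r*a1) • (star (qj*((c:ℍ[ℝ])+(s:ℍ[ℝ])*qi)*x)*qi*x + star x*qi*(qj*((c:ℍ[ℝ])+(s:ℍ[ℝ])*qi)*x))
      + (r*(-2*a3)) • (star x*qi*x)
      + r • (((star (qj*((c:ℍ[ℝ])+(s:ℍ[ℝ])*qi)*x)*((a4:ℍ[ℝ])-(a3:ℍ[ℝ])*qi)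
               + star x*(((k*a3:ℝ):ℍ[ℝ])-((2*a1-k*a4:ℝ):ℍ[ℝ])*qi))*qj*((c:ℍ[ℝ])+(s:ℍ[ℝ])*qi)
              + star x*((a4:ℍ[ℝ])-(a3:ℍ[ℝ])*qi)*qj*(((-s*k:ℝ):ℍ[ℝ])+((c*k:ℝ):ℍ[ℝ])*qi))*x
            + star x*((a4:ℍ[ℝ])-(a3:ℍ[ℝ])*qi)*qj*((c:ℍ[ℝ])+(s:ℍ[ℝ])*qi)*(qj*((c:ℍ[ℝ])+(s:ℍ[ℝ])*qi)*x)) := by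
  have e1 : qi.re = 0 ∧ qi.imI = 1 ∧ qi.imJ = 0 ∧ qi.imK = 0 := ⟨rfl, rfl, rfl, rfl⟩
  have e2 : qj.re = 0 ∧ qj.imI = 0 ∧ qj.imJ = 1 ∧ qj.imK = 0 := ⟨rfl, rfl, rfl, rfl⟩
  simp only [e1, e2, Quaternion.ext_iff, Quaternion.re_mul, Quaternion.imI_mul,
    Quaternion.imJ_mul, Quaternion.imK_mul, Quaternion.re_add, Quaternion.imI_add,
    Quaternion.imJ_add, Quaternion.imK_add, Quaternion.re_sub, Quaternion.imI_sub,
    Quaternion.imJ_sub, Quaternion.imK_sub, Quaternion.re_smul, Quaternion.imI_smul,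
    Quaternion.imJ_smul, Quaternion.imK_smul, Quaternion.re_star, Quaternion.imI_star,
    Quaternion.imJ_star, Quaternion.imK_star, Quaternion.re_coe, Quaternion.imI_coe,
    Quaternion.imJ_coe, Quaternion.imK_coe, Quaternion.re_zero, Quaternion.imI_zero,
    Quaternion.imJ_zero, Quaternion.imK_zero, smul_eq_mul]
  generalize x.re = xr at *
  generalize x.imI = xi at *
  generalize x.imJ = xj at *
  generalize x.imK = xk at *
  refine ⟨by ring, ?_, ?_, ?_⟩
  · linear_combination (2*xk*xk*a3*r + 2*xj*xj*a3*r - 2*xi*xi*a3*r - 2*xr*xr*a3*r) * h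
  · linear_combination (-4*xi*xj*a3*r + 4*xr*xk*a3*r) * h
  · linear_combination (-4*xi*xk*a3*r - 4*xr*xj*a3*r) * h

set_option maxHeartbeats 1000000 in
/-- Let `κ : ℝ → ℝ` be continuous, `K v = ∫₀ᵛ κ`, let
`k₁, k₃, k₄ : ℝ → ℝ` be `C¹` functions satisfying `k₁' = −2k₃`, `k₃' = 2k₁ − κ·k₄`,
`k₄' = κ·k₃`, and let `f : ℝ → ℍ` be a `C¹` curve satisfying
`f' v = j·(cos (K v) + sin (K v)·i)·f v`.  Then the function `gfun k₁ k₃ k₄ K f` is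
constant; in particular its `i`-, `j`- and `k`-components (the curvature functions
`κ̃₁, κ̃₂, κ̃₃`) are independent of `v`. -/
theorem stmt_19 (κ : ℝ → ℝ) (hκ : Continuous κ)
    (K : ℝ → ℝ) (hK : ∀ v, K v = ∫ t in (0:ℝ)..v, κ t)
    (k₁ k₃ k₄ : ℝ → ℝ)
    (hk₁ : ContDiff ℝ 1 k₁) (hk₃ : ContDiff ℝ 1 k₃) (hk₄ : ContDiff ℝ 1 k₄)
    (hd₁ : ∀ v, deriv k₁ v = -2 * k₃ v)
    (hd₃ : ∀ v, deriv k₃ v = 2 * k₁ v - κ v * k₄ v)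
    (hd₄ : ∀ v, deriv k₄ v = κ v * k₃ v)
    (f : ℝ → ℍ[ℝ]) (hf : ContDiff ℝ 1 f)
    (hf' : ∀ v, deriv f v =
      qj * ((Real.cos (K v) : ℍ[ℝ]) + (Real.sin (K v) : ℍ[ℝ]) * qi) * f v) :
    ∀ v w : ℝ, gfun k₁ k₃ k₄ K f v = gfun k₁ k₃ k₄ K f w := by
  have H : ∀ v : ℝ, HasDerivAt (gfun k₁ k₃ k₄ K f) 0 v := by
    intro v
    have hKfun : K = fun u => ∫ t in (0:ℝ)..u, κ t := funext hK
    have hKd : HasDerivAt K (κ v) v := by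
      rw [hKfun]; exact (hκ.integral_hasStrictDerivAt 0 v).hasDerivAt
    have hcos : HasDerivAt (fun t => Real.cos (K t)) (-Real.sin (K v) * κ v) v := hKd.cos
    have hsin : HasDerivAt (fun t => Real.sin (K t)) (Real.cos (K v) * κ v) v := hKd.sin
    have hE : HasDerivAt (fun t => ((Real.cos (K t) : ℍ[ℝ]) + (Real.sin (K t) : ℍ[ℝ]) * qi))
        (((-Real.sin (K v) * κ v : ℝ) : ℍ[ℝ]) + ((Real.cos (K v) * κ v : ℝ) : ℍ[ℝ]) * qi) v :=
      (coe_hasDerivAt' hcos).add ((coe_hasDerivAt' hsin).mul_const qi)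
    have hx : HasDerivAt f
        (qj * ((Real.cos (K v) : ℍ[ℝ]) + (Real.sin (K v) : ℍ[ℝ]) * qi) * f v) v := by
      have := (hf.differentiable one_ne_zero v).hasDerivAt
      rwa [hf' v] at this
    have hstar : HasDerivAt (fun t => star (f t))
        (star (qj * ((Real.cos (K v) : ℍ[ℝ]) + (Real.sin (K v) : ℍ[ℝ]) * qi) * f v)) v := hx.star
    have hk1d : HasDerivAt k₁ (-2 * k₃ v) v := by
      have := (hk₁.differentiable one_ne_zero v).hasDerivAt; rwa [hd₁ v] at this
    have hk3d : HasDerivAt k₃ (2 * k₁ v - κ v * k₄ v) v := by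
      have := (hk₃.differentiable one_ne_zero v).hasDerivAt; rwa [hd₃ v] at this
    have hk4d : HasDerivAt k₄ (κ v * k₃ v) v := by
      have := (hk₄.differentiable one_ne_zero v).hasDerivAt; rwa [hd₄ v] at this
    have hP : HasDerivAt (fun t => ((k₄ t : ℍ[ℝ]) - (k₃ t : ℍ[ℝ]) * qi))
        (((κ v * k₃ v : ℝ) : ℍ[ℝ]) - ((2 * k₁ v - κ v * k₄ v : ℝ) : ℍ[ℝ]) * qi) v :=
      (coe_hasDerivAt' hk4d).sub ((coe_hasDerivAt' hk3d).mul_const qi)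
    have hc1 : HasDerivAt (fun t => Real.sqrt 2 * k₁ t) (Real.sqrt 2 * (-2 * k₃ v)) v :=
      hk1d.const_mul _
    have hX : HasDerivAt (fun t => star (f t) * qi * f t)
        (star (qj * ((Real.cos (K v) : ℍ[ℝ]) + (Real.sin (K v) : ℍ[ℝ]) * qi) * f v) * qi * f v
          + star (f v) * qi
            * (qj * ((Real.cos (K v) : ℍ[ℝ]) + (Real.sin (K v) : ℍ[ℝ]) * qi) * f v)) v :=
      (hstar.mul_const qi).mul hx
    have hT := ((((hstar.mul hP).mul_const qj).mul hE).mul hx).const_smul (Real.sqrt 2)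
    have htot := (hc1.smul hX).add hT
    have hgoal : HasDerivAt (fun t =>
        (Real.sqrt 2 * k₁ t : ℝ) • (star (f t) * qi * f t)
          + (Real.sqrt 2 : ℝ) • (star (f t) * ((k₄ t : ℍ[ℝ]) - (k₃ t : ℍ[ℝ]) * qi) * qj
              * ((Real.cos (K t) : ℍ[ℝ]) + (Real.sin (K t) : ℍ[ℝ]) * qi) * f t)) 0 v := by
      exact htot.congr_deriv (key_identity (f v) (Real.cos (K v)) (Real.sin (K v)) (k₁ v) (k₃ v) (k₄ v) (κ v)
        (Real.sqrt 2) (Real.sin_sq_add_cos_sq (K v))).symm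
    exact hgoal
  intro v w
  exact is_const_of_deriv_eq_zero (fun t => (H t).differentiableAt)
    (fun t => (H t).deriv) v w
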